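/- arXiv:2410.06290 — 5 statements merged into one kernel-verified Lean document; each statement's English description precedes it below -/
import Mathlib

section
/- Let F ⊆ ℝ^d be nonempty, let r = dim affine(F), let L be the linear subspace associated with affine(F), and let Z ∈ ℝ^{d×r} have columns forming an orthonormal basis of L. If k ≥ ConeRank(Z), then there exists a matrix A ∈ ℝ^{k×d} such that the score map S(f) = A f satisfies the improvement objective on F: for all f, f' ∈ F, A f' ≥ A f (elementwise) implies f' ≥ f (elementwise). -/
/-- The polyhedral cone generated by the rows of a matrix `W`:
the set of nonnegative linear combinations `λᵀ W` of the rows of `W`. -/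
def coneOf {m n : ℕ} (W : Matrix (Fin m) (Fin n) ℝ) : Set (Fin n → ℝ) :=
  {x | ∃ l : Fin m → ℝ, 0 ≤ l ∧ x = Matrix.vecMul l W}

/-- `ConeRank(W)`: the minimum `k` such that there exists `V ∈ ℝ^{k×n}` with `K_W ⊆ K_V`. -/
noncomputable def coneRank {m n : ℕ} (W : Matrix (Fin m) (Fin n) ℝ) : ℕ :=
  sInf {k : ℕ | ∃ V : Matrix (Fin k) (Fin n) ℝ, coneOf W ⊆ coneOf V}

lemma coneOf_pad {m k n : ℕ} (h : m ≤ k) (V : Matrix (Fin m) (Fin n) ℝ) :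
    ∃ V' : Matrix (Fin k) (Fin n) ℝ, coneOf V ⊆ coneOf V' := by
  refine ⟨fun i => if h2 : (i : ℕ) < m then V ⟨i, h2⟩ else 0, ?_⟩
  rintro x ⟨l, hl, rfl⟩
  refine ⟨fun i => if h2 : (i : ℕ) < m then l ⟨i, h2⟩ else 0, ?_, ?_⟩
  · intro i
    dsimp only
    split
    · exact hl _
    · exact le_rfl
  · funext j
    set G : ℕ → ℝ := fun x => if h2 : x < m then l ⟨x, h2⟩ * V ⟨x, h2⟩ j else 0 with hG
    have h1 : (Matrix.vecMul l V) j = ∑ i : Fin m, G i := by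
      simp only [Matrix.vecMul, dotProduct, hG]
      apply Finset.sum_congr rfl
      intro i _
      rw [dif_pos i.isLt]
    have h2 : ∑ i : Fin k,
        (if h2 : (i : ℕ) < m then l ⟨i, h2⟩ else 0) *
          (if h2 : (i : ℕ) < m then V ⟨i, h2⟩ else 0) j = ∑ i : Fin k, G i := by
      apply Finset.sum_congr rfl
      intro i _
      by_cases hi : (i : ℕ) < m
      · simp [hG, hi]
      · simp [hG, hi]
    have h3 : ∑ i : Fin k, G i = ∑ i : Fin m, G i := by
      rw [Fin.sum_univ_eq_sum_range, Fin.sum_univ_eq_sum_range]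
      symm
      apply Finset.sum_subset (Finset.range_subset_range.2 h)
      intro x _ hx
      rw [Finset.mem_range] at hx
      simp [hG, hx]
    show (Matrix.vecMul l V) j = _
    rw [h1, ← h3, ← h2]
    simp [Matrix.vecMul, dotProduct]


/-- Let `F ⊆ ℝ^d` be nonempty, `r = dim affine(F)`, `L` the linear subspace
associated with `affine(F)` (`L = vectorSpan ℝ F`), and `Z ∈ ℝ^{d×r}` a matrix whose columns
form an orthonormal basis of `L`.  If `k ≥ ConeRank(Z)`, then there exists `A ∈ ℝ^{k×d}`
such that `S(f) = A f` satisfies the improvement objective on `F`. -/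
theorem improvement_linear_sufficient {d r k : ℕ}
    (F : Set (Fin d → ℝ)) (hF : F.Nonempty)
    (Z : Matrix (Fin d) (Fin r) ℝ)
    (hr : r = Module.finrank ℝ ↥(vectorSpan ℝ F))
    (hZorth : ∀ j j' : Fin r, (∑ i, Z i j * Z i j') = if j = j' then (1 : ℝ) else 0)
    (hZspan : vectorSpan ℝ F =
      Submodule.span ℝ (Set.range fun j : Fin r => fun i : Fin d => Z i j))
    (hk : coneRank Z ≤ k) :
    ∃ A : Matrix (Fin k) (Fin d) ℝ,
      ∀ f ∈ F, ∀ f' ∈ F, A.mulVec f ≤ A.mulVec f' → f ≤ f' := by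
  -- get minimizing V
  have hne : {n : ℕ | ∃ V : Matrix (Fin n) (Fin r) ℝ, coneOf Z ⊆ coneOf V}.Nonempty :=
    ⟨d, Z, subset_rfl⟩
  obtain ⟨V, hV⟩ := Nat.sInf_mem hne
  obtain ⟨V', hV'⟩ := coneOf_pad hk V
  have hVZ : coneOf Z ⊆ coneOf V' := hV.trans hV'
  -- Zᵀ * Z = 1
  have hZtZ : Z.transpose * Z = 1 := by
    ext j j'
    simp only [Matrix.mul_apply, Matrix.transpose_apply, Matrix.one_apply]
    exact hZorth j j'
  refine ⟨V' * Z.transpose, ?_⟩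
  intro f hf f' hf' hle
  set g : Fin d → ℝ := f' - f with hg
  have hgspan : g ∈ vectorSpan ℝ F := by
    have := vsub_mem_vectorSpan ℝ hf' hf
    simpa [hg] using this
  rw [hZspan] at hgspan
  rw [Submodule.mem_span_range_iff_exists_fun] at hgspan
  obtain ⟨c, hc⟩ := hgspan
  have hgZ : g = Z.mulVec c := by
    funext i
    rw [← hc]
    simp [Matrix.mulVec, dotProduct, mul_comm]
  -- A g = V' c
  have hAg : (V' * Z.transpose).mulVec g = V'.mulVec c := by
    rw [hgZ, Matrix.mulVec_mulVec, Matrix.mul_assoc, hZtZ, Matrix.mul_one]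
  have hAgpos : 0 ≤ V'.mulVec c := by
    rw [← hAg]
    have : (V' * Z.transpose).mulVec g =
        (V' * Z.transpose).mulVec f' - (V' * Z.transpose).mulVec f := by
      rw [hg, Matrix.mulVec_sub]
    rw [this]
    intro t
    simpa using sub_nonneg.2 (hle t)
  -- each coordinate
  intro i
  have hrow : (fun j => Z i j) ∈ coneOf Z := by
    refine ⟨Pi.single i 1, ?_, ?_⟩
    · intro i'
      classical
      rcases eq_or_ne i' i with rfl | hne'
      · simp
      · simp [Pi.single_apply, hne']
    · funext j
      simp [Matrix.vecMul, dotProduct, Pi.single_apply, Finset.sum_ite_eq']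
  obtain ⟨μ, hμ, hμV⟩ := hVZ hrow
  have hgi : g i = ∑ t, μ t * (V'.mulVec c) t := by
    have : g i = ∑ j, Z i j * c j := by
      rw [hgZ]; simp [Matrix.mulVec, dotProduct]
    rw [this]
    have h4 : ∀ j, Z i j = ∑ t, μ t * V' t j := fun j => by
      have := congrFun hμV j
      simpa [Matrix.vecMul, dotProduct] using this
    calc ∑ j, Z i j * c j = ∑ j, (∑ t, μ t * V' t j) * c j := by
            simp_rw [h4]
      _ = ∑ t, μ t * (V'.mulVec c) t := by
            simp_rw [Finset.sum_mul, Matrix.mulVec, dotProduct, Finset.mul_sum]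
            rw [Finset.sum_comm]
            apply Finset.sum_congr rfl
            intro t _
            apply Finset.sum_congr rfl
            intro j _
            ring
  have : 0 ≤ g i := by
    rw [hgi]
    exact Finset.sum_nonneg fun t _ => mul_nonneg (hμ t) (hAgpos t)
  have h0 : (0:ℝ) ≤ f' i - f i := by simpa [hg] using this
  linarith
end

section
/- Let F ⊆ ℝ^d be nonempty, let r = dim affine(F), let L be the linear subspace associated with affine(F), and let Z ∈ ℝ^{d×r} have columns forming an orthonormal basis of L. If k ≥ ConeGeneratingRank(Z), then there exists a matrix A ∈ ℝ^{k×d} such that S(f) = A f satisfies the improvement objective on F (for all f, f' ∈ F, A f' ≥ A f implies f' ≥ f) and S is monotone on F (for all f, f' ∈ F, f' ≥ f implies A f' ≥ A f). -/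
/-- `ConeGeneratingRank(W)`: the minimum `k` such that there exists `V ∈ ℝ^{k×n}`
with `K_V = K_W`. -/
noncomputable def coneGeneratingRank {m n : ℕ} (W : Matrix (Fin m) (Fin n) ℝ) : ℕ :=
  sInf {k : ℕ | ∃ V : Matrix (Fin k) (Fin n) ℝ, coneOf V = coneOf W}

/-- Every row of `W` belongs to the cone generated by `W`. -/
lemma row_mem_coneOf {m n : ℕ} (W : Matrix (Fin m) (Fin n) ℝ) (i : Fin m) :
    (fun t => W i t) ∈ coneOf W := by
  classical
  refine ⟨fun i' => if i' = i then 1 else 0, ?_, ?_⟩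
  · intro i'; dsimp; split <;> norm_num
  · funext t
    simp [Matrix.vecMul, dotProduct, ite_mul, Finset.sum_ite_eq']

/-- Let `F ⊆ ℝ^d` be nonempty, `r = dim affine(F)`, `L` the linear subspace
associated with `affine(F)` (`L = vectorSpan ℝ F`), and `Z ∈ ℝ^{d×r}` a matrix whose columns
form an orthonormal basis of `L`.  If `k ≥ ConeGeneratingRank(Z)`, then there exists
`A ∈ ℝ^{k×d}` such that `S(f) = A f` satisfies the improvement objective on `F` and is
monotone on `F`. -/
theorem improvement_linear_monotone_sufficient {d r k : ℕ}
    (F : Set (Fin d → ℝ)) (hF : F.Nonempty)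
    (Z : Matrix (Fin d) (Fin r) ℝ)
    (hr : r = Module.finrank ℝ ↥(vectorSpan ℝ F))
    (hZorth : ∀ j j' : Fin r, (∑ i, Z i j * Z i j') = if j = j' then (1 : ℝ) else 0)
    (hZspan : vectorSpan ℝ F =
      Submodule.span ℝ (Set.range fun j : Fin r => fun i : Fin d => Z i j))
    (hk : coneGeneratingRank Z ≤ k) :
    ∃ A : Matrix (Fin k) (Fin d) ℝ,
      (∀ f ∈ F, ∀ f' ∈ F, A.mulVec f ≤ A.mulVec f' → f ≤ f') ∧
      (∀ f ∈ F, ∀ f' ∈ F, f ≤ f' → A.mulVec f ≤ A.mulVec f') := by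
  classical
  -- a minimal cone-generating matrix V₀
  set n := coneGeneratingRank Z with hn
  have hmem : ∃ V : Matrix (Fin n) (Fin r) ℝ,
      coneOf V = coneOf Z :=
    Nat.sInf_mem (⟨d, Z, rfl⟩ :
      {k : ℕ | ∃ V : Matrix (Fin k) (Fin r) ℝ, coneOf V = coneOf Z}.Nonempty)
  obtain ⟨V₀, hV₀⟩ := hmem
  -- the matrix A : pad V₀ ⬝ Zᵀ with zero rows
  set A : Matrix (Fin k) (Fin d) ℝ :=
    Matrix.of (fun i j => if h : (i : ℕ) < n then ∑ t, V₀ ⟨i, h⟩ t * Z j t else 0)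
    with hAdef
  -- key projection fact: on the span of the columns of Z, v = Z (Zᵀ v)
  have key : ∀ v ∈ Submodule.span ℝ (Set.range fun t : Fin r => fun i : Fin d => Z i t),
      ∀ j, v j = ∑ t, Z j t * ∑ i, Z i t * v i := by
    intro v hv
    induction hv using Submodule.span_induction with
    | mem x hx =>
      obtain ⟨t0, rfl⟩ := hx
      intro j
      show Z j t0 = _
      calc Z j t0 = ∑ t, Z j t * if t = t0 then (1:ℝ) else 0 := by
            simp [mul_ite, Finset.sum_ite_eq']
        _ = ∑ t, Z j t * ∑ i, Z i t * Z i t0 := by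
            refine Finset.sum_congr rfl fun t _ => ?_
            rw [hZorth t t0]
    | zero => intro j; simp
    | add x y hx hy ihx ihy =>
      intro j
      have : ∀ t, (∑ i, Z i t * (x i + y i))
          = (∑ i, Z i t * x i) + ∑ i, Z i t * y i := by
        intro t
        rw [← Finset.sum_add_distrib]
        exact Finset.sum_congr rfl fun i _ => by ring
      simp only [Pi.add_apply, this, mul_add, Finset.sum_add_distrib]
      rw [← ihx j, ← ihy j]
    | smul a x hx ih =>
      intro j
      have hinner : ∀ t, (∑ i, Z i t * (a * x i)) = a * ∑ i, Z i t * x i := by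
        intro t
        rw [Finset.mul_sum]
        exact Finset.sum_congr rfl fun i _ => by ring
      simp only [Pi.smul_apply, smul_eq_mul]
      calc a * x j = a * ∑ t, Z j t * ∑ i, Z i t * x i := by rw [← ih j]
        _ = ∑ t, Z j t * ∑ i, Z i t * (a * x i) := by
            rw [Finset.mul_sum]
            refine Finset.sum_congr rfl fun t _ => ?_
            rw [hinner t]; ring
  -- for f, f' ∈ F we get f' - f = Z c with c = Zᵀ (f' - f)
  have hspan : ∀ f ∈ F, ∀ f' ∈ F, ∀ j,
      f' j - f j = ∑ t, Z j t * ∑ i, Z i t * (f' i - f i) := by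
    intro f hf f' hf' j
    have hv : f' - f ∈ vectorSpan ℝ F := by
      have := vsub_mem_vectorSpan ℝ hf' hf
      simpa using this
    rw [hZspan] at hv
    exact key _ hv j
  -- swapping sums
  have swap : ∀ {m : ℕ} (M : Matrix (Fin m) (Fin r) ℝ) (w : Fin m → ℝ) (c : Fin r → ℝ),
      ∑ t, (∑ i, w i * M i t) * c t = ∑ i, w i * ∑ t, M i t * c t := by
    intro m M w c
    simp only [Finset.sum_mul, Finset.mul_sum]
    rw [Finset.sum_comm]
    exact Finset.sum_congr rfl fun i _ => Finset.sum_congr rfl fun t _ => by ring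
  -- computation of mulVec
  have hA : ∀ (f : Fin d → ℝ) (i : Fin k) (h : (i : ℕ) < n),
      A.mulVec f i = ∑ t, V₀ ⟨i, h⟩ t * ∑ j, Z j t * f j := by
    intro f i h
    simp only [hAdef, Matrix.mulVec, dotProduct, Matrix.of_apply, dif_pos h,
      Finset.sum_mul]
    rw [Finset.sum_comm]
    refine Finset.sum_congr rfl fun t _ => ?_
    rw [Finset.mul_sum]
    exact Finset.sum_congr rfl fun j _ => by ring
  have hA0 : ∀ (f : Fin d → ℝ) (i : Fin k), ¬ ((i : ℕ) < n) → A.mulVec f i = 0 := by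
    intro f i h
    simp [hAdef, Matrix.mulVec, dotProduct, dif_neg h]
  have hAdiff : ∀ (f f' : Fin d → ℝ) (i : Fin k) (h : (i : ℕ) < n),
      A.mulVec f' i - A.mulVec f i = ∑ t, V₀ ⟨i, h⟩ t * ∑ j, Z j t * (f' j - f j) := by
    intro f f' i h
    rw [hA f' i h, hA f i h, ← Finset.sum_sub_distrib]
    refine Finset.sum_congr rfl fun t _ => ?_
    rw [← mul_sub, ← Finset.sum_sub_distrib]
    congr 1
    exact Finset.sum_congr rfl fun j _ => by ring
  refine ⟨A, ?_, ?_⟩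
  · -- improvement objective
    intro f hf f' hf' hle j
    rw [← sub_nonneg]
    -- row j of Z is in coneOf V₀
    have hz : (fun t => Z j t) ∈ coneOf V₀ := by
      rw [hV₀]; exact row_mem_coneOf Z j
    obtain ⟨l, hl0, hlv⟩ := hz
    have hzjt : ∀ t, Z j t = ∑ i0, l i0 * V₀ i0 t := by
      intro t
      have := congrFun hlv t
      simpa [Matrix.vecMul, dotProduct] using this
    calc (0:ℝ) ≤ ∑ i0, l i0 * ∑ t, V₀ i0 t * ∑ i, Z i t * (f' i - f i) := by
          refine Finset.sum_nonneg fun i0 _ => mul_nonneg (hl0 i0) ?_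
          have hi0k : ((i0 : ℕ)) < k := lt_of_lt_of_le i0.2 hk
          have h2 : (⟨(i0 : ℕ), i0.2⟩ : Fin n) = i0 := by ext; rfl
          have := hAdiff f f' ⟨(i0 : ℕ), hi0k⟩ i0.2
          rw [h2] at this
          rw [← this]
          have := hle ⟨(i0 : ℕ), hi0k⟩
          linarith
      _ = ∑ t, (∑ i0, l i0 * V₀ i0 t) * ∑ i, Z i t * (f' i - f i) := (swap V₀ l _).symm
      _ = ∑ t, Z j t * ∑ i, Z i t * (f' i - f i) := by
          exact Finset.sum_congr rfl fun t _ => by rw [← hzjt t]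
      _ = f' j - f j := (hspan f hf f' hf' j).symm
  · -- monotone
    intro f hf f' hf' hle i
    by_cases h : (i : ℕ) < n
    · rw [← sub_nonneg, hAdiff f f' i h]
      -- row ⟨i,h⟩ of V₀ is in coneOf Z
      have hv : (fun t => V₀ ⟨i, h⟩ t) ∈ coneOf Z := by
        rw [← hV₀]; exact row_mem_coneOf V₀ ⟨i, h⟩
      obtain ⟨μ, hμ0, hμv⟩ := hv
      have hvt : ∀ t, V₀ ⟨i, h⟩ t = ∑ j, μ j * Z j t := by
        intro t
        have := congrFun hμv t
        simpa [Matrix.vecMul, dotProduct] using this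
      calc (0:ℝ) ≤ ∑ j, μ j * ∑ t, Z j t * ∑ i', Z i' t * (f' i' - f i') := by
            refine Finset.sum_nonneg fun j _ => mul_nonneg (hμ0 j) ?_
            rw [← hspan f hf f' hf' j]
            have := hle j
            linarith
        _ = ∑ t, (∑ j, μ j * Z j t) * ∑ i', Z i' t * (f' i' - f i') := (swap Z μ _).symm
        _ = ∑ t, V₀ ⟨i, h⟩ t * ∑ i', Z i' t * (f' i' - f i') := by
            exact Finset.sum_congr rfl fun t _ => by rw [← hvt t]
    · rw [hA0 f i h, hA0 f' i h]
end

section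
/- Let F ⊆ ℝ^d have nonempty relative interior with respect to affine(F), let r = dim affine(F), let L be the linear subspace associated with affine(F), and let Z ∈ ℝ^{d×r} have columns forming an orthonormal basis of L. If A ∈ ℝ^{k×d} is such that S(f) = A f satisfies the improvement objective on F (for all f, f' ∈ F, A f' ≥ A f elementwise implies f' ≥ f elementwise), then k ≥ ConeRank(Z). -/
open Set Matrix

namespace PointedCone

variable {E : Type*} [AddCommGroup E] [Module ℝ E]

lemma mem_hull_finset_iff {t : Finset E} {x : E} :
    x ∈ hull ℝ (t : Set E) ↔ ∃ f : E → ℝ, (∀ y ∈ t, 0 ≤ f y) ∧ ∑ y ∈ t, f y • y = x := by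
  rw [Submodule.mem_span_finset]
  constructor
  · rintro ⟨f, -, rfl⟩
    exact ⟨fun y => f y, fun y _ => (f y).2, rfl⟩
  · rintro ⟨f, hf, rfl⟩
    classical
    refine ⟨fun y => if h : y ∈ t then ⟨f y, hf y h⟩ else 0, fun y hy => ?_, ?_⟩
    · by_contra hyt
      exact hy (dif_neg hyt)
    · refine Finset.sum_congr rfl fun y hy => ?_
      simp [hy, ← Nonneg.coe_smul]

lemma mem_hull_range_iff {ι : Type*} [Fintype ι] {v : ι → E} {x : E} :
    x ∈ hull ℝ (range v) ↔ ∃ c : ι → ℝ, 0 ≤ c ∧ ∑ i, c i • v i = x := by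
  rw [Submodule.mem_span_range_iff_exists_fun]
  constructor
  · rintro ⟨c, rfl⟩
    exact ⟨fun i => c i, fun i => (c i).2, rfl⟩
  · rintro ⟨c, hc, rfl⟩
    exact ⟨fun i => ⟨c i, hc i⟩, rfl⟩

theorem mem_hull_erase [DecidableEq E] {t : Finset E} (ht : ¬LinearIndepOn ℝ id (t : Set E))
    {x : E} (hx : x ∈ hull ℝ (t : Set E)) : ∃ y ∈ t, x ∈ hull ℝ (t.erase y : Set E) := by
  rw [mem_hull_finset_iff] at hx
  obtain ⟨f, hf, rfl⟩ := hx
  obtain ⟨g, hg, hpos⟩ : ∃ g : E → ℝ, ∑ y ∈ t, g y • y = 0 ∧ ∃ y ∈ t, 0 < g y := by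
    obtain ⟨g, hg, y, hy, hgy⟩ := not_linearIndepOn_finset_iff.mp ht
    rcases hgy.lt_or_gt with hneg | hpos
    · exact ⟨-g, by simpa [neg_smul] using hg, y, hy, neg_pos.mpr hneg⟩
    · exact ⟨g, hg, y, hy, hpos⟩
  -- subtract the largest multiple of `g` that keeps all coefficients nonnegative
  obtain ⟨y₀, hy₀, hmin⟩ := {y ∈ t | 0 < g y}.exists_min_image (fun y => f y / g y)
    (by simpa [Finset.Nonempty] using hpos)
  rw [Finset.mem_filter] at hy₀
  set r := f y₀ / g y₀
  have hr : 0 ≤ r := div_nonneg (hf y₀ hy₀.1) hy₀.2.le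
  refine ⟨y₀, hy₀.1, mem_hull_finset_iff.mpr ⟨fun y => f y - r * g y, fun y hy => ?_, ?_⟩⟩
  · have hy := Finset.mem_of_mem_erase hy
    rcases le_or_gt (g y) 0 with hgy | hgy
    · nlinarith [hf y hy]
    · linarith [(le_div_iff₀ hgy).mp (hmin y (Finset.mem_filter.mpr ⟨hy, hgy⟩))]
  · have hzero : (f y₀ - r * g y₀) • y₀ = 0 := by
      simp [r, hy₀.2.ne']
    rw [Finset.sum_erase t (f := fun y => (f y - r * g y) • y) hzero]
    simp only [sub_smul, mul_smul, Finset.sum_sub_distrib, ← Finset.smul_sum, hg, smul_zero,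
      sub_zero]

theorem exists_linearIndepOn_of_mem_hull {s : Finset E} {x : E} (hx : x ∈ hull ℝ (s : Set E)) :
    ∃ t ⊆ s, LinearIndepOn ℝ id (t : Set E) ∧ x ∈ hull ℝ (t : Set E) := by
  classical
  induction s using Finset.strongInduction with
  | H s ih =>
    by_cases hs : LinearIndepOn ℝ id (s : Set E)
    · exact ⟨s, subset_rfl, hs, hx⟩
    obtain ⟨y, hy, hxy⟩ := mem_hull_erase hs hx
    obtain ⟨t, hts, ht, hxt⟩ := ih _ (Finset.erase_ssubset hy) hxy
    exact ⟨t, hts.trans (Finset.erase_subset _ _), ht, hxt⟩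

variable [TopologicalSpace E] [IsTopologicalAddGroup E] [ContinuousSMul ℝ E] [T2Space E]

theorem isClosed_hull_range_of_linearIndependent {ι : Type*} [Fintype ι] {v : ι → E}
    (hv : LinearIndependent ℝ v) :
    IsClosed (hull ℝ (range v) : Set E) := by
  have himage : (hull ℝ (range v) : Set E) = Fintype.linearCombination ℝ v '' Ici 0 := by
    ext x
    simp [mem_hull_range_iff, Fintype.linearCombination_apply]
  have hinj := linearIndependent_iff_injective_fintypeLinearCombination.mp hv
  rw [himage]
  exact (LinearMap.isClosedEmbedding_of_injective (LinearMap.ker_eq_bot.mpr hinj)).isClosedMap _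
    isClosed_Ici

theorem isClosed_hull_finset (s : Finset E) : IsClosed (hull ℝ (s : Set E) : Set E) := by
  have hunion : (hull ℝ (s : Set E) : Set E) = ⋃ t ∈ {t : Finset E | t ⊆ s ∧
      LinearIndepOn ℝ id (t : Set E)}, (hull ℝ (t : Set E) : Set E) := by
    ext x
    simp only [Set.mem_iUnion, Set.mem_ofPred_eq, SetLike.mem_coe]
    constructor
    · intro hx
      obtain ⟨t, hts, ht, hxt⟩ := exists_linearIndepOn_of_mem_hull hx
      exact ⟨t, ⟨hts, ht⟩, hxt⟩
    · rintro ⟨t, ⟨hts, -⟩, hxt⟩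
      exact Submodule.span_mono (Finset.coe_subset.mpr hts) hxt
  rw [hunion]
  refine (s.powerset.finite_toSet.subset fun t ht => Finset.mem_powerset.mpr ht.1).isClosed_biUnion
    fun t ht => ?_
  simpa using isClosed_hull_range_of_linearIndependent ht.2

theorem isClosed_hull_of_finite {s : Set E} (hs : s.Finite) : IsClosed (hull ℝ s : Set E) := by
  simpa using isClosed_hull_finset hs.toFinset

variable [LocallyConvexSpace ℝ E] in
theorem exists_strongDual_of_notMem_hull {s : Set E} (hs : s.Finite) {x : E}
    (hx : x ∉ hull ℝ s) : ∃ f : StrongDual ℝ E, (∀ v ∈ s, 0 ≤ f v) ∧ f x < 0 := by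
  let C : ProperCone ℝ E := ⟨hull ℝ s, isClosed_hull_of_finite hs⟩
  obtain ⟨f, hfC, hfx⟩ := C.hyperplane_separation_point (x₀ := x) hx
  exact ⟨f, fun v hv => hfC v (subset_hull hv), hfx⟩

end PointedCone

lemma coneOf_eq_hull {m n : ℕ} (W : Matrix (Fin m) (Fin n) ℝ) :
    coneOf W = PointedCone.hull ℝ (range fun i => W i) := by
  ext x
  rw [SetLike.mem_coe, PointedCone.mem_hull_range_iff, coneOf, Set.mem_ofPred_eq]
  simp only [vecMul_eq_sum, eq_comm]

lemma coneOf_subset_coneOf {m k n : ℕ} {W : Matrix (Fin m) (Fin n) ℝ}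
    {V : Matrix (Fin k) (Fin n) ℝ} (h : ∀ i, W i ∈ coneOf V) : coneOf W ⊆ coneOf V := by
  simp only [coneOf_eq_hull, SetLike.coe_subset_coe] at h ⊢
  exact Submodule.span_le.mpr (Set.range_subset_iff.mpr h)

theorem mem_coneOf_of_forall_mulVec_nonneg {m n : ℕ} (W : Matrix (Fin m) (Fin n) ℝ) (b : Fin n → ℝ)
    (h : ∀ y, 0 ≤ W *ᵥ y → 0 ≤ b ⬝ᵥ y) : b ∈ coneOf W := by
  rw [coneOf_eq_hull]
  by_contra hb
  obtain ⟨f, hfW, hfb⟩ := PointedCone.exists_strongDual_of_notMem_hull (Set.finite_range W) hb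
  let y : Fin n → ℝ := fun j => f (Pi.single j 1)
  have hf : ∀ x, f x = x ⬝ᵥ y := fun x => by
    have := LinearMap.pi_apply_eq_sum_univ (f : (Fin n → ℝ) →ₗ[ℝ] ℝ) x
    simp only [ContinuousLinearMap.coe_coe, smul_eq_mul] at this
    rw [this, dotProduct]
    congr! 3 with j
    ext j'
    simp [Pi.single_apply, eq_comm]
  have hWy : 0 ≤ W *ᵥ y := fun i => by
    simpa only [hf, Pi.zero_apply, mulVec] using hfW (W i) (Set.mem_range_self i)
  linarith [h y hWy, hf b]

open Filter Topology in
theorem exists_pos_add_smul_mem {ι : Type*} [Fintype ι] {F : Set (ι → ℝ)} {f₀ : ι → ℝ} {R : ℝ}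
    (hf₀ : f₀ ∈ F) (hR : 0 < R)
    (hball : ∀ g ∈ affineSpan ℝ F, ∑ i, (g i - f₀ i) ^ 2 ≤ R ^ 2 → g ∈ F)
    {w : ι → ℝ} (hw : w ∈ vectorSpan ℝ F) : ∃ ε : ℝ, 0 < ε ∧ f₀ + ε • w ∈ F := by
  set S := ∑ i, w i ^ 2
  have hsmall : ∀ᶠ ε in 𝓝[>] (0 : ℝ), ε ^ 2 * S < R ^ 2 := by
    have hlim : Tendsto (fun ε : ℝ => ε ^ 2 * S) (𝓝 0) (𝓝 0) :=
      (by fun_prop : Continuous fun ε : ℝ => ε ^ 2 * S).tendsto' 0 0 (by simp)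
    exact nhdsWithin_le_nhds (hlim.eventually (gt_mem_nhds (by positivity)))
  obtain ⟨ε, hεS, hε⟩ := (hsmall.and self_mem_nhdsWithin).exists
  refine ⟨ε, hε, hball _ ?_ ?_⟩
  · rw [add_comm, ← vadd_eq_add]
    refine AffineSubspace.vadd_mem_of_mem_direction ?_ (mem_affineSpan ℝ hf₀)
    rw [direction_affineSpan]
    exact Submodule.smul_mem _ ε hw
  · calc ∑ i, ((f₀ + ε • w) i - f₀ i) ^ 2 = ε ^ 2 * S := by simp [S, Finset.mul_sum, mul_pow]
      _ ≤ R ^ 2 := hεS.le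

theorem nonneg_of_mulVec_nonneg {ι κ : Type*} [Fintype ι] {F : Set (ι → ℝ)} {f₀ : ι → ℝ} {R : ℝ}
    (hf₀ : f₀ ∈ F) (hR : 0 < R)
    (hball : ∀ g ∈ affineSpan ℝ F, ∑ i, (g i - f₀ i) ^ 2 ≤ R ^ 2 → g ∈ F)
    {A : Matrix κ ι ℝ} (himp : ∀ f ∈ F, ∀ f' ∈ F, A *ᵥ f ≤ A *ᵥ f' → f ≤ f')
    {w : ι → ℝ} (hw : w ∈ vectorSpan ℝ F) (hAw : 0 ≤ A *ᵥ w) : 0 ≤ w := by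
  obtain ⟨ε, hε, hmem⟩ := exists_pos_add_smul_mem hf₀ hR hball hw
  have hle : f₀ ≤ f₀ + ε • w := himp f₀ hf₀ _ hmem <| by
    rw [mulVec_add, mulVec_smul]
    exact le_add_of_nonneg_right (smul_nonneg hε.le hAw)
  exact (smul_nonneg_iff_nonneg_of_pos_left hε).mp (le_add_iff_nonneg_right f₀ |>.mp hle)

theorem improvement_linear_necessary_general {d r k : ℕ}
    (F : Set (Fin d → ℝ))
    (hri : ∃ f₀ ∈ F, ∃ R : ℝ, 0 < R ∧
      ∀ g : Fin d → ℝ, g ∈ affineSpan ℝ F → (∑ i, (g i - f₀ i) ^ 2) ≤ R ^ 2 → g ∈ F)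
    (Z : Matrix (Fin d) (Fin r) ℝ)
    (hZspan : vectorSpan ℝ F =
      Submodule.span ℝ (Set.range fun j : Fin r => fun i : Fin d => Z i j))
    (A : Matrix (Fin k) (Fin d) ℝ)
    (himp : ∀ f ∈ F, ∀ f' ∈ F, A.mulVec f ≤ A.mulVec f' → f ≤ f') :
    coneRank Z ≤ k := by
  obtain ⟨f₀, hf₀, R, hR, hball⟩ := hri
  have hZy : ∀ y, Z *ᵥ y ∈ vectorSpan ℝ F := fun y =>
    hZspan ▸ Z.range_mulVecLin ▸ LinearMap.mem_range_self Z.mulVecLin y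
  have hrows : ∀ i, Z i ∈ coneOf (A * Z) := fun i =>
    mem_coneOf_of_forall_mulVec_nonneg _ _ fun y hy =>
      nonneg_of_mulVec_nonneg hf₀ hR hball himp (hZy y) (by rwa [mulVec_mulVec]) i
  exact Nat.sInf_le ⟨A * Z, coneOf_subset_coneOf hrows⟩

/-- Let `F ⊆ ℝ^d` have nonempty relative interior with respect to
`affine(F)`, let `r = dim affine(F)`, `L` the linear subspace associated with `affine(F)`
(`L = vectorSpan ℝ F`), and `Z ∈ ℝ^{d×r}` a matrix whose columns form an orthonormal basis
of `L`.  If `A ∈ ℝ^{k×d}` is such that `S(f) = A f` satisfies the improvement objective on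
`F`, then `k ≥ ConeRank(Z)`. -/
theorem improvement_linear_necessary {d r k : ℕ}
    (F : Set (Fin d → ℝ))
    (hri : ∃ f₀ ∈ F, ∃ R : ℝ, 0 < R ∧
      ∀ g : Fin d → ℝ, g ∈ affineSpan ℝ F → (∑ i, (g i - f₀ i) ^ 2) ≤ R ^ 2 → g ∈ F)
    (Z : Matrix (Fin d) (Fin r) ℝ)
    (hr : r = Module.finrank ℝ ↥(vectorSpan ℝ F))
    (hZorth : ∀ j j' : Fin r, (∑ i, Z i j * Z i j') = if j = j' then (1 : ℝ) else 0)
    (hZspan : vectorSpan ℝ F =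
      Submodule.span ℝ (Set.range fun j : Fin r => fun i : Fin d => Z i j))
    (A : Matrix (Fin k) (Fin d) ℝ)
    (himp : ∀ f ∈ F, ∀ f' ∈ F, A.mulVec f ≤ A.mulVec f' → f ≤ f') :
    coneRank Z ≤ k :=
  improvement_linear_necessary_general F hri Z hZspan A himp
end

section
/- Let W ∈ ℝ^{m×n} and suppose the cone K_W generated by the rows of W is pointed. Then ConeGeneratingRank(W) = ConeSubsetRank(W). -/
/-- `ConeSubsetRank(W)`: the minimum `k` such that there exists `V ∈ ℝ^{k×n}` whose rows
are all rows of `W` and with `K_V = K_W`. -/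
noncomputable def coneSubsetRank {m n : ℕ} (W : Matrix (Fin m) (Fin n) ℝ) : ℕ :=
  sInf {k : ℕ | ∃ V : Matrix (Fin k) (Fin n) ℝ,
    (∀ i : Fin k, ∃ i' : Fin m, V i = W i') ∧ coneOf V = coneOf W}

/-!
In a pointed cone `C`, a generating family of minimal length is irredundant: no generator `v` lies
in the cone `D` spanned by the others. Pointedness then makes the ray `ℝ≥0 v` a face of
`C = D ⊔ ℝ≥0 v`, and any family generating `C` must contain a positive multiple of `v`, since a
conic combination landing in a face uses only vectors of that face. Hence every row of a minimal
generating matrix can be replaced by a row of `W` without changing the cone.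
-/

open PointedCone Submodule Set

theorem ConvexCone.Salient.eq_zero_of_mem_of_neg_mem {R M : Type*} [Semiring R] [PartialOrder R]
    [AddCommGroup M] [SMul R M] {C : ConvexCone R M} (hC : C.Salient)
    {x : M} (hx : x ∈ C) (hnx : -x ∈ C) : x = 0 := by
  by_contra h
  exact hC x hx h hnx

namespace PointedCone

variable {R M : Type*} [Field R] [LinearOrder R] [IsStrictOrderedRing R]
  [AddCommGroup M] [Module R M]

theorem mem_hull_singleton {x v : M} : x ∈ hull R {v} ↔ ∃ t : R, 0 ≤ t ∧ t • v = x := by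
  rw [mem_span_singleton]
  exact ⟨fun ⟨t, ht⟩ => ⟨t, t.2, ht⟩, fun ⟨t, ht, htx⟩ => ⟨⟨t, ht⟩, htx⟩⟩

theorem hull_range_eq_hull_succAbove_sup {k : ℕ} (v : Fin (k + 1) → M) (i : Fin (k + 1)) :
    hull R (range v) = hull R (range (v ∘ i.succAbove)) ⊔ hull R {v i} := by
  rw [sup_comm, ← span_union, range_comp, Fin.range_succAbove, ← image_singleton,
    ← image_union, union_compl_self, image_univ]

theorem isFaceOf_hull_singleton_sup {D : PointedCone R M} {v : M}
    (hC : (D ⊔ hull R {v}).toConvexCone.Salient) (hv : v ∉ D) :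
    (hull R {v}).IsFaceOf (D ⊔ hull R {v}) := by
  refine .of_mem_of_add_mem_left le_sup_right fun {x y} hx hy hxy => ?_
  obtain ⟨d, hd, p, hp, rfl⟩ := mem_sup.1 hx
  obtain ⟨e, he, q, hq, rfl⟩ := mem_sup.1 hy
  obtain ⟨a, -, rfl⟩ := mem_hull_singleton.1 hp
  obtain ⟨b, -, rfl⟩ := mem_hull_singleton.1 hq
  obtain ⟨t, -, ht⟩ := mem_hull_singleton.1 hxy
  have hde : d + e = (t - a - b) • v := by
    rw [sub_smul, sub_smul, ht]
    abel
  -- A positive multiple of `v` in `D` contradicts `hv`; a nonpositive one forces `d + e = 0`.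
  obtain hs | hs := lt_or_ge 0 (t - a - b)
  · exact absurd ((D.smul_mem_iff hs).1 (hde ▸ D.add_mem hd he)) hv
  have hde0 : d + e = 0 := by
    have hsv : (-(t - a - b)) • v ∈ D ⊔ hull R {v} :=
      mem_sup_right (smul_mem _ (neg_nonneg.2 hs) (subset_hull rfl))
    rw [hde, ← neg_eq_zero, ← neg_smul]
    refine hC.eq_zero_of_mem_of_neg_mem hsv ?_
    rw [neg_smul, neg_neg, ← hde]
    exact add_mem (mem_sup_left hd) (mem_sup_left he)
  have hd0 : d = 0 := hC.eq_zero_of_mem_of_neg_mem (mem_sup_left hd)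
    (neg_eq_of_add_eq_zero_right hde0 ▸ mem_sup_left he)
  rw [hd0, zero_add]
  exact hp

theorem IsFaceOf.exists_pos_smul_eq {C : PointedCone R M} {v : M}
    (hF : (hull R {v}).IsFaceOf C) (hv : v ≠ 0) {ι : Type*} [Fintype ι] {w : ι → M}
    (hw : hull R (range w) = C) : ∃ i, ∃ c : R, 0 < c ∧ w i = c • v := by
  have hvw : v ∈ hull R (range w) := hw ▸ hF.le (subset_hull rfl)
  obtain ⟨c, hc⟩ := mem_span_range_iff_exists_fun _ |>.1 hvw
  obtain ⟨i, hi⟩ : ∃ i, c i • w i ≠ 0 := by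
    by_contra! h
    exact hv (by simp [← hc, h])
  have hci : (0 : R) < c i := lt_of_le_of_ne (c i).2 fun h => hi (by simp [← Nonneg.coe_smul, ← h])
  have hwC : ∀ j, w j ∈ C := fun j => hw ▸ subset_hull (mem_range_self j)
  obtain ⟨t, ht, hti⟩ := mem_hull_singleton.1 <|
    hF.mem_of_sum_smul_mem hwC (fun j => (c j).2) (hc ▸ subset_hull rfl) i hci
  refine ⟨i, t, lt_of_le_of_ne ht ?_, hti.symm⟩
  rintro rfl
  exact hi (by simp [← hti])

theorem hull_range_eq_of_pos_smul {ι : Type*} {u v : ι → M} {c : ι → R} (hc : ∀ i, 0 < c i)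
    (huv : ∀ i, u i = c i • v i) : hull R (range u) = hull R (range v) := by
  apply le_antisymm <;> refine span_le.2 (range_subset_iff.2 fun i => ?_)
  · exact huv i ▸ (smul_mem_iff _ (hc i)).2 (subset_hull (mem_range_self i))
  · exact (smul_mem_iff _ (hc i)).1 (huv i ▸ subset_hull (mem_range_self i))

theorem notMem_hull_succAbove_of_minimal {k : ℕ} {v : Fin (k + 1) → M}
    (hmin : ∀ (k' : ℕ) (u : Fin k' → M), hull R (range u) = hull R (range v) → k + 1 ≤ k')
    (i : Fin (k + 1)) : v i ∉ hull R (range (v ∘ i.succAbove)) := by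
  intro hi
  have := hmin k (v ∘ i.succAbove) <| by
    rw [hull_range_eq_hull_succAbove_sup v i, sup_eq_left.2]
    exact span_le.2 (singleton_subset_iff.2 hi)
  omega

theorem exists_pos_smul_eq_of_minimal {C : PointedCone R M} (hC : C.toConvexCone.Salient)
    {k : ℕ} {v : Fin k → M} (hv : hull R (range v) = C)
    (hmin : ∀ (k' : ℕ) (u : Fin k' → M), hull R (range u) = C → k ≤ k')
    {ι : Type*} [Fintype ι] {w : ι → M} (hw : hull R (range w) = C) (i : Fin k) :
    ∃ j, ∃ c : R, 0 < c ∧ w j = c • v i := by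
  subst hv
  cases k with
  | zero => exact i.elim0
  | succ k =>
    have hvi := notMem_hull_succAbove_of_minimal hmin i
    rw [hull_range_eq_hull_succAbove_sup v i] at hC hw
    exact (isFaceOf_hull_singleton_sup hC hvi).exists_pos_smul_eq
      (fun h => hvi (h ▸ zero_mem _)) hw

end PointedCone

theorem coneOf_eq_hull_s11 {k n : ℕ} (V : Matrix (Fin k) (Fin n) ℝ) :
    coneOf V = hull ℝ (range V) := by
  ext x
  refine Iff.trans ?_ (mem_span_range_iff_exists_fun _).symm
  constructor
  · rintro ⟨l, hl, rfl⟩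
    exact ⟨fun i => ⟨l i, hl i⟩, (Matrix.vecMul_eq_sum l V).symm⟩
  · rintro ⟨c, rfl⟩
    exact ⟨fun i => c i, fun i => (c i).2, (Matrix.vecMul_eq_sum _ V).symm⟩

section
variable {m n : ℕ} (W : Matrix (Fin m) (Fin n) ℝ)

theorem exists_coneOf_eq_of_coneGeneratingRank :
    ∃ V : Matrix (Fin (coneGeneratingRank W)) (Fin n) ℝ, coneOf V = coneOf W :=
  Nat.sInf_mem (s := {k | ∃ V : Matrix (Fin k) (Fin n) ℝ, coneOf V = coneOf W}) ⟨m, W, rfl⟩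

theorem coneGeneratingRank_le {k : ℕ} {V : Matrix (Fin k) (Fin n) ℝ} (h : coneOf V = coneOf W) :
    coneGeneratingRank W ≤ k :=
  Nat.sInf_le ⟨V, h⟩

theorem coneSubsetRank_le {k : ℕ} {V : Matrix (Fin k) (Fin n) ℝ} (hrows : ∀ i, ∃ i', V i = W i')
    (h : coneOf V = coneOf W) : coneSubsetRank W ≤ k :=
  Nat.sInf_le ⟨V, hrows, h⟩

theorem coneGeneratingRank_le_coneSubsetRank : coneGeneratingRank W ≤ coneSubsetRank W :=
  csInf_le_csInf (OrderBot.bddBelow _) ⟨m, W, fun i => ⟨i, rfl⟩, rfl⟩ fun _ ⟨V, _, hV⟩ => ⟨V, hV⟩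

end

/-- If the cone `K_W` generated by the rows of `W` is pointed, then
`ConeGeneratingRank(W) = ConeSubsetRank(W)`. -/
theorem cgr_eq_csr_of_pointed {m n : ℕ} (W : Matrix (Fin m) (Fin n) ℝ)
    (hpointed : ∀ x ∈ coneOf W, x ≠ 0 → -x ∉ coneOf W) :
    coneGeneratingRank W = coneSubsetRank W := by
  have hcone {k : ℕ} (V : Matrix (Fin k) (Fin n) ℝ) :
      coneOf V = coneOf W ↔ hull ℝ (range V) = hull ℝ (range W) := by
    rw [coneOf_eq_hull_s11, coneOf_eq_hull_s11, SetLike.coe_set_eq]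
  have hsalient : (hull ℝ (range W)).toConvexCone.Salient := by
    rw [coneOf_eq_hull_s11] at hpointed
    exact hpointed
  refine le_antisymm (coneGeneratingRank_le_coneSubsetRank W) ?_
  obtain ⟨V, hV⟩ := exists_coneOf_eq_of_coneGeneratingRank W
  choose j c hc hWV using exists_pos_smul_eq_of_minimal hsalient ((hcone V).1 hV)
    (fun k u hu => coneGeneratingRank_le W ((hcone u).2 hu)) rfl
  refine coneSubsetRank_le W (V := W.submatrix j id) (fun i => ⟨j i, rfl⟩) ?_
  rw [hcone, ← (hcone V).1 hV]
  exact hull_range_eq_of_pos_smul hc hWV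
end

section
/- Let W = {w₁, …, w_m} ⊆ ℝ^n generate the cone K_W, let L = lineality(K_W) = K_W ∩ (−K_W), and let W_L = {w ∈ W : w ∈ L}. Then the cone generated by W_L equals L, i.e., L = cone(W_L). -/
/-- The cone generated by a finite family of vectors `w₁, …, w_m`:
the set of their nonnegative linear combinations. -/
def coneFam {n m : ℕ} (w : Fin m → (Fin n → ℝ)) : Set (Fin n → ℝ) :=
  {x | ∃ l : Fin m → ℝ, 0 ≤ l ∧ x = ∑ i, l i • w i}

/-- Let `W = {w₁, …, w_m} ⊆ ℝ^n` generate the cone `K_W`, let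
`L = lineality(K_W) = K_W ∩ (−K_W)`, and let `W_L` be the vectors of `W` lying in `L`.
Then `L = cone(W_L)`. -/
theorem lineality_space_generated_by_lineal_points {n m : ℕ}
    (w : Fin m → (Fin n → ℝ))
    (L : Submodule ℝ (Fin n → ℝ))
    (hL : (L : Set (Fin n → ℝ)) = coneFam w ∩ (-(coneFam w))) :
    (L : Set (Fin n → ℝ)) =
      {x | ∃ l : Fin m → ℝ, 0 ≤ l ∧ (∀ i, w i ∉ L → l i = 0) ∧ x = ∑ i, l i • w i} := by
  ext x
  constructor
  · intro hx
    have hx' := hx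
    rw [hL] at hx'
    obtain ⟨⟨l, hl, hxl⟩, hneg⟩ := hx'
    rw [Set.mem_neg] at hneg
    obtain ⟨l', hl', hxl'⟩ := hneg
    set c : Fin m → ℝ := l + l' with hc
    have hc0 : (0:Fin m → ℝ) ≤ c := add_nonneg hl hl'
    have hsum : ∑ i, c i • w i = 0 := by
      have h : ∑ i, c i • w i = (∑ i, l i • w i) + ∑ i, l' i • w i := by
        rw [← Finset.sum_add_distrib]
        refine Finset.sum_congr rfl fun i _ => ?_
        simp [hc, add_smul]
      rw [h, ← hxl, ← hxl']
      simp
    have key : ∀ i, 0 < c i → w i ∈ L := by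
      intro i hci
      have hmem : w i ∈ (L : Set (Fin n → ℝ)) := by
        rw [hL]
        constructor
        · exact ⟨fun j => if j = i then 1 else 0,
            fun j => by dsimp; split <;> norm_num,
            by simp⟩
        · rw [Set.mem_neg]
          refine ⟨fun j => if j = i then 0 else (c i)⁻¹ * c j, ?_, ?_⟩
          · intro j; dsimp; split
            · exact le_refl 0
            · exact mul_nonneg (inv_nonneg.mpr (le_of_lt hci)) (hc0 j)
          · have hne : c i ≠ 0 := ne_of_gt hci
            have h2 : ∑ j ∈ Finset.univ.erase i, c j • w j = -(c i • w i) := by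
              have h := Finset.add_sum_erase Finset.univ (fun j => c j • w j)
                (Finset.mem_univ i)
              rw [hsum] at h
              exact (neg_eq_of_add_eq_zero_right h).symm
            have h1 : ∑ j, (if j = i then 0 else (c i)⁻¹ * c j) • w j
                = ∑ j ∈ Finset.univ.erase i, (c i)⁻¹ • (c j • w j) := by
              rw [← Finset.sum_erase Finset.univ
                (f := fun j => (if j = i then (0:ℝ) else (c i)⁻¹ * c j) • w j) (a := i) (by simp)]
              exact Finset.sum_congr rfl fun j hj => by
                have hji : j ≠ i := Finset.ne_of_mem_erase hj
                simp [hji, mul_smul]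
            show -w i = _
            rw [h1, ← Finset.smul_sum, h2, smul_neg, smul_smul,
              inv_mul_cancel₀ hne, one_smul]
      exact hmem
    exact ⟨l, hl, fun i hi => by
      by_contra hli
      have hlpos : 0 < l i := lt_of_le_of_ne (hl i) (Ne.symm hli)
      have hcpos : 0 < c i := by
        have h' : (0:ℝ) ≤ l' i := hl' i
        simp only [hc, Pi.add_apply]
        linarith
      exact hi (key i hcpos), hxl⟩
  · rintro ⟨l, hl, hsupp, rfl⟩
    exact Submodule.sum_mem L fun i _ => by
      by_cases hwi : w i ∈ L
      · exact Submodule.smul_mem L _ hwi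
      · rw [hsupp i hwi]; simp
end
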